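/- Let p be a real polynomial of degree at most N, let x₀, h, H ∈ ℝ, and let m, n ∈ ℕ. Then the m × n real matrix A defined by A(i, j) = p(x₀ + h·i + H·j) for 0 ≤ i < m, 0 ≤ j < n has rank at most N + 1. -/

import Mathlib

/-!
By Taylor's formula `p (a + b) = ∑_{k ≤ N} (taylor a p).coeff k * b ^ k`, so the matrix
`(p (a i + b j))ᵢⱼ` factors through `R^(N+1)` as the product of the matrix of Taylor
coefficients at the `a i` and the matrix of powers of the `b j`.
-/

open Polynomial

theorem Polynomial.eval_add_eq_sum_taylor_coeff_mul_pow {R : Type*} [CommSemiring R] {p : R[X]}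
    {N : ℕ} (hp : p.natDegree ≤ N) (a b : R) :
    p.eval (a + b) = ∑ k : Fin (N + 1), (taylor a p).coeff k * b ^ (k : ℕ) := by
  have hdeg : (taylor a p).natDegree < N + 1 := by
    rw [natDegree_taylor]
    omega
  rw [Fin.sum_univ_eq_sum_range (fun k => (taylor a p).coeff k * b ^ k),
    ← eval_eq_sum_range' hdeg, taylor_eval, add_comm]

theorem Matrix.of_eval_add_eq_mul {R ι κ : Type*} [CommSemiring R] [Fintype ι] [Fintype κ]
    {p : R[X]} {N : ℕ} (hp : p.natDegree ≤ N) (a : ι → R) (b : κ → R) :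
    Matrix.of (fun i j => p.eval (a i + b j)) =
      Matrix.of (fun i (k : Fin (N + 1)) => (taylor (a i) p).coeff k) *
        Matrix.of (fun (k : Fin (N + 1)) j => b j ^ (k : ℕ)) := by
  ext i j
  simp only [Matrix.of_apply, Matrix.mul_apply, eval_add_eq_sum_taylor_coeff_mul_pow hp]

theorem Matrix.rank_of_eval_add_le {R ι κ : Type*} [CommRing R] [StrongRankCondition R]
    [Fintype ι] [Fintype κ] {p : R[X]} {N : ℕ} (hp : p.natDegree ≤ N) (a : ι → R) (b : κ → R) :
    (Matrix.of fun i j => p.eval (a i + b j)).rank ≤ N + 1 := by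
  rw [Matrix.of_eval_add_eq_mul hp]
  exact (Matrix.rank_mul_le_right _ _).trans ((Matrix.rank_le_card_height _).trans (by simp))

/-- A polynomial of degree at most `N` sampled on a two-parameter uniform grid yields a
matrix of rank at most `N + 1` (key linear-algebra fact behind QTT rank bounds for
polynomials sampled on uniform grids). -/
theorem polynomial_grid_matrix_rank (p : Polynomial ℝ) (N : ℕ) (hp : p.natDegree ≤ N)
    (x₀ h H : ℝ) (m n : ℕ) :
    Matrix.rank (Matrix.of fun (i : Fin m) (j : Fin n) =>
      p.eval (x₀ + h * (i : ℕ) + H * (j : ℕ))) ≤ N + 1 :=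
  Matrix.rank_of_eval_add_le hp (fun i : Fin m => x₀ + h * (i : ℕ))
    (fun j : Fin n => H * (j : ℕ))
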